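/- arXiv:1404.0576 — 4 statements merged into one kernel-verified Lean document; each statement's English description precedes it below -/
import Mathlib

section
/- Let I be a nonempty finite set of nodes and L a finite set of edges with endpoint maps pos, neg : L → I, pos(ℓ) ≠ neg(ℓ); let E_i and deg_i be as usual, and set d_{iℓ} = 1 if pos(ℓ) = i, d_{iℓ} = −1 if neg(ℓ) = i, and d_{iℓ} = 0 otherwise. Suppose given, for each edge ℓ: σ_ℓ > 0, φ_ℓ ∈ ℝ, vectors a_ℓ, c_ℓ ∈ ℝᵈ, and a continuous linear map A_ℓ : ℝᵈ → ℝᵈ; and for each node i: y_i ∈ ℝᵈ, r_i ≥ 0, κ_i ∈ (0,1), and s_i ∈ ℝ with σ_ℓ ≤ s_i for every ℓ ∈ E_i, such that −κ_i·r_i + 2·deg_i·s_i·‖y_i‖² ≤ 0. Define Δy_ℓ := y(pos ℓ) − y(neg ℓ), û_i := −Σ_{ℓ∈L} d_{iℓ}·a_ℓ, and κ := max_{i∈I} κ_i. Then Σ_{i∈I}(−r_i + ⟨û_i, y_i⟩) + Σ_{ℓ∈L} ⟨c_ℓ, Δy_ℓ⟩ + Σ_{ℓ∈L}( −(1/(2σ_ℓ))·(1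 + φ_ℓ²·‖A_ℓ‖²)·‖a_ℓ − c_ℓ‖² − φ_ℓ·⟨a_ℓ − c_ℓ, A_ℓ(Δy_ℓ)⟩ ) ≤ −(1 − κ)·Σ_{i∈I} r_i. -/
/-!
Summing the incidence matrix over the nodes telescopes the control term into
`-∑ ℓ, ⟪a ℓ, Δy ℓ⟫`, so the left side is `-∑ r i` plus one term per edge. On an edge, Young's
inequality with weight `σ ℓ` absorbs both cross terms into the quadratic penalty on `a ℓ - c ℓ`,
leaving `σ ℓ ‖Δy ℓ‖² ≤ 2 σ ℓ (‖y (pos ℓ)‖² + ‖y (neg ℓ)‖²)`. Handing each half to its endpoint,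
node `i` receives at most `2 deg i * s i * ‖y i‖² ≤ κ i * r i`, and `∑ κ i * r i ≤ κ * ∑ r i`.
-/

open RealInnerProductSpace

/-- Incidence matrix entries of the graph encoded by endpoint maps `pos`, `neg`. -/
def incidence {I L : Type*} [DecidableEq I] (pos neg : L → I) (i : I) (ℓ : L) : ℝ :=
  if pos ℓ = i then 1 else if neg ℓ = i then -1 else 0

open Finset

lemma mul_le_sq_div_add_mul_sq {σ : ℝ} (hσ : 0 < σ) (x y : ℝ) :
    x * y ≤ x ^ 2 / (2 * σ) + σ / 2 * y ^ 2 := by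
  have key : 0 ≤ (x - σ * y) ^ 2 / (2 * σ) := by positivity
  have expand : (x - σ * y) ^ 2 / (2 * σ) = x ^ 2 / (2 * σ) + σ / 2 * y ^ 2 - x * y := by
    field_simp
    ring
  linarith

lemma norm_sub_sq_le_two_mul {E : Type*} [NormedAddCommGroup E] [InnerProductSpace ℝ E]
    (u v : E) : ‖u - v‖ ^ 2 ≤ 2 * (‖u‖ ^ 2 + ‖v‖ ^ 2) := by
  linarith [parallelogram_law_with_norm ℝ u v, sq_nonneg ‖u + v‖]

lemma neg_inner_sub_mul_inner_sub_le {E : Type*} [NormedAddCommGroup E] [InnerProductSpace ℝ E]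
    {σ : ℝ} (hσ : 0 < σ) (φ : ℝ) (T : E →L[ℝ] E) (e Δ : E) :
    -⟪e, Δ⟫ - φ * ⟪e, T Δ⟫ - 1 / (2 * σ) * (1 + φ ^ 2 * ‖T‖ ^ 2) * ‖e‖ ^ 2 ≤ σ * ‖Δ‖ ^ 2 := by
  have h_inner : -⟪e, Δ⟫ ≤ ‖e‖ * ‖Δ‖ := (neg_le_abs _).trans (abs_real_inner_le_norm e Δ)
  have h_coupling : -(φ * ⟪e, T Δ⟫) ≤ (|φ| * ‖T‖ * ‖e‖) * ‖Δ‖ := by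
    calc -(φ * ⟪e, T Δ⟫) ≤ |φ| * |⟪e, T Δ⟫| := by rw [← abs_mul]; exact neg_le_abs _
      _ ≤ |φ| * (‖e‖ * (‖T‖ * ‖Δ‖)) := by
        gcongr
        exact (abs_real_inner_le_norm e (T Δ)).trans (by gcongr; exact T.le_opNorm Δ)
      _ = (|φ| * ‖T‖ * ‖e‖) * ‖Δ‖ := by ring
  have young₁ := mul_le_sq_div_add_mul_sq hσ ‖e‖ ‖Δ‖
  have young₂ := mul_le_sq_div_add_mul_sq hσ (|φ| * ‖T‖ * ‖e‖) ‖Δ‖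
  have hsq : (|φ| * ‖T‖ * ‖e‖) ^ 2 = φ ^ 2 * ‖T‖ ^ 2 * ‖e‖ ^ 2 := by
    rw [mul_pow, mul_pow, sq_abs]
  have hsplit : 1 / (2 * σ) * (1 + φ ^ 2 * ‖T‖ ^ 2) * ‖e‖ ^ 2
      = ‖e‖ ^ 2 / (2 * σ) + φ ^ 2 * ‖T‖ ^ 2 * ‖e‖ ^ 2 / (2 * σ) := by ring
  rw [hsq] at young₂
  linarith

section Graph

variable {I L : Type*} [DecidableEq I] (pos neg : L → I)

def incidentEdges [Fintype L] (i : I) : Finset L :=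
  univ.filter fun ℓ => pos ℓ = i ∨ neg ℓ = i

variable {pos neg}

lemma incidence_eq_ite_sub_ite {ℓ : L} (h : pos ℓ ≠ neg ℓ) (i : I) :
    incidence pos neg i ℓ = (if pos ℓ = i then 1 else 0) - (if neg ℓ = i then 1 else 0) := by
  unfold incidence
  by_cases hp : pos ℓ = i
  · subst hp
    simp [h.symm]
  · by_cases hn : neg ℓ = i <;> simp [hp, hn]

variable [Fintype I]

lemma sum_incidence_smul {M : Type*} [AddCommGroup M] [Module ℝ M] {ℓ : L} (h : pos ℓ ≠ neg ℓ)
    (f : I → M) : ∑ i, incidence pos neg i ℓ • f i = f (pos ℓ) - f (neg ℓ) := by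
  simp only [incidence_eq_ite_sub_ite h, sub_smul, ite_smul, one_smul, zero_smul,
    sum_sub_distrib, sum_ite_eq, mem_univ, if_true]

lemma sum_inner_neg_sum_incidence_smul {E : Type*} [NormedAddCommGroup E] [InnerProductSpace ℝ E]
    [Fintype L] (hpn : ∀ ℓ, pos ℓ ≠ neg ℓ) (a : L → E) (y : I → E) :
    ∑ i, ⟪-∑ ℓ, incidence pos neg i ℓ • a ℓ, y i⟫ = -∑ ℓ, ⟪a ℓ, y (pos ℓ) - y (neg ℓ)⟫ := by
  simp_rw [inner_neg_left, sum_inner, real_inner_smul_left, ← real_inner_smul_right,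
    sum_neg_distrib]
  rw [sum_comm]
  simp_rw [← inner_sum, sum_incidence_smul (hpn _)]

lemma sum_add_endpoints_eq_sum_incidentEdges {R : Type*} [AddCommMonoid R] [Fintype L]
    (hpn : ∀ ℓ, pos ℓ ≠ neg ℓ) (F : L → I → R) :
    ∑ ℓ, (F ℓ (pos ℓ) + F ℓ (neg ℓ)) = ∑ i, ∑ ℓ ∈ incidentEdges pos neg i, F ℓ i := by
  have endpoints (ℓ : L) : univ.filter (fun i => pos ℓ = i ∨ neg ℓ = i) = {pos ℓ, neg ℓ} := by
    ext i
    simp [eq_comm]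
  calc ∑ ℓ, (F ℓ (pos ℓ) + F ℓ (neg ℓ))
      = ∑ ℓ, ∑ i ∈ univ.filter (fun i => pos ℓ = i ∨ neg ℓ = i), F ℓ i := by
        simp_rw [endpoints, sum_pair (hpn _)]
    _ = ∑ i, ∑ ℓ ∈ incidentEdges pos neg i, F ℓ i :=
        sum_comm' fun ℓ i => by simp [incidentEdges]

end Graph

lemma sum_mul_le_sup'_mul_sum {ι : Type*} (t : Finset ι) (ht : t.Nonempty) (κ r : ι → ℝ)
    (hr : ∀ i ∈ t, 0 ≤ r i) : ∑ i ∈ t, κ i * r i ≤ t.sup' ht κ * ∑ i ∈ t, r i := by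
  rw [mul_sum]
  exact sum_le_sum fun i hi => mul_le_mul_of_nonneg_right (le_sup' κ hi) (hr i hi)

theorem stmt_2_general {I L : Type*} [Fintype I] [Nonempty I] [Fintype L] [DecidableEq I]
    (pos neg : L → I) (hpn : ∀ ℓ, pos ℓ ≠ neg ℓ)
    {d : ℕ}
    (σ : L → ℝ) (hσ : ∀ ℓ, 0 < σ ℓ)
    (φ : L → ℝ)
    (a c : L → EuclideanSpace ℝ (Fin d))
    (A : L → (EuclideanSpace ℝ (Fin d) →L[ℝ] EuclideanSpace ℝ (Fin d)))
    (y : I → EuclideanSpace ℝ (Fin d))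
    (r : I → ℝ) (hr : ∀ i, 0 ≤ r i)
    (κ : I → ℝ)
    (s : I → ℝ) (hσs : ∀ i ℓ, (pos ℓ = i ∨ neg ℓ = i) → σ ℓ ≤ s i)
    (hdis : ∀ i, -κ i * r i +
      2 * ((Finset.univ.filter (fun ℓ => pos ℓ = i ∨ neg ℓ = i)).card : ℝ) * s i * ‖y i‖ ^ 2 ≤ 0) :
    ∑ i, (-r i + ⟪-∑ ℓ, incidence pos neg i ℓ • a ℓ, y i⟫) +
      ∑ ℓ, ⟪c ℓ, y (pos ℓ) - y (neg ℓ)⟫ +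
      ∑ ℓ, (-(1 / (2 * σ ℓ)) * (1 + (φ ℓ) ^ 2 * ‖A ℓ‖ ^ 2) * ‖a ℓ - c ℓ‖ ^ 2
            - φ ℓ * ⟪a ℓ - c ℓ, A ℓ (y (pos ℓ) - y (neg ℓ))⟫) ≤
      -(1 - Finset.univ.sup' Finset.univ_nonempty κ) * ∑ i, r i := by
  have edge (ℓ : L) :
      -⟪a ℓ, y (pos ℓ) - y (neg ℓ)⟫ + ⟪c ℓ, y (pos ℓ) - y (neg ℓ)⟫ +
        (-(1 / (2 * σ ℓ)) * (1 + (φ ℓ) ^ 2 * ‖A ℓ‖ ^ 2) * ‖a ℓ - c ℓ‖ ^ 2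
          - φ ℓ * ⟪a ℓ - c ℓ, A ℓ (y (pos ℓ) - y (neg ℓ))⟫)
      ≤ 2 * σ ℓ * ‖y (pos ℓ)‖ ^ 2 + 2 * σ ℓ * ‖y (neg ℓ)‖ ^ 2 := by
    have h := neg_inner_sub_mul_inner_sub_le (hσ ℓ) (φ ℓ) (A ℓ) (a ℓ - c ℓ)
      (y (pos ℓ) - y (neg ℓ))
    have hΔ := mul_le_mul_of_nonneg_left
      (norm_sub_sq_le_two_mul (y (pos ℓ)) (y (neg ℓ))) (hσ ℓ).le
    rw [inner_sub_left] at h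
    linarith
  have node (i : I) : ∑ ℓ ∈ incidentEdges pos neg i, 2 * σ ℓ * ‖y i‖ ^ 2 ≤ κ i * r i := by
    have dissipation : -κ i * r i +
        2 * ((incidentEdges pos neg i).card : ℝ) * s i * ‖y i‖ ^ 2 ≤ 0 := hdis i
    have degree_bound := sum_le_card_nsmul (incidentEdges pos neg i)
      (fun ℓ => 2 * σ ℓ * ‖y i‖ ^ 2) (2 * s i * ‖y i‖ ^ 2)
      fun ℓ hℓ => by gcongr; exact hσs i ℓ (mem_filter.mp hℓ).2
    rw [nsmul_eq_mul] at degree_bound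
    linarith
  have edges := sum_le_sum fun ℓ (_ : ℓ ∈ univ) => edge ℓ
  rw [sum_add_endpoints_eq_sum_incidentEdges hpn fun ℓ i => 2 * σ ℓ * ‖y i‖ ^ 2,
    sum_add_distrib, sum_add_distrib, sum_neg_distrib] at edges
  have nodes := sum_le_sum fun i (_ : i ∈ univ) => node i
  have hmax := sum_mul_le_sup'_mul_sum univ univ_nonempty κ r fun i _ => hr i
  rw [sum_add_distrib, sum_inner_neg_sum_incidence_smul hpn, sum_neg_distrib]
  linarith

theorem stmt_2 {I L : Type*} [Fintype I] [Nonempty I] [Fintype L] [DecidableEq I]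
    (pos neg : L → I) (hpn : ∀ ℓ, pos ℓ ≠ neg ℓ)
    {d : ℕ}
    (σ : L → ℝ) (hσ : ∀ ℓ, 0 < σ ℓ)
    (φ : L → ℝ)
    (a c : L → EuclideanSpace ℝ (Fin d))
    (A : L → (EuclideanSpace ℝ (Fin d) →L[ℝ] EuclideanSpace ℝ (Fin d)))
    (y : I → EuclideanSpace ℝ (Fin d))
    (r : I → ℝ) (hr : ∀ i, 0 ≤ r i)
    (κ : I → ℝ) (hκ : ∀ i, κ i ∈ Set.Ioo (0 : ℝ) 1)
    (s : I → ℝ) (hσs : ∀ i ℓ, (pos ℓ = i ∨ neg ℓ = i) → σ ℓ ≤ s i)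
    (hdis : ∀ i, -κ i * r i +
      2 * ((Finset.univ.filter (fun ℓ => pos ℓ = i ∨ neg ℓ = i)).card : ℝ) * s i * ‖y i‖ ^ 2 ≤ 0) :
    ∑ i, (-r i + ⟪-∑ ℓ, incidence pos neg i ℓ • a ℓ, y i⟫) +
      ∑ ℓ, ⟪c ℓ, y (pos ℓ) - y (neg ℓ)⟫ +
      ∑ ℓ, (-(1 / (2 * σ ℓ)) * (1 + (φ ℓ) ^ 2 * ‖A ℓ‖ ^ 2) * ‖a ℓ - c ℓ‖ ^ 2
            - φ ℓ * ⟪a ℓ - c ℓ, A ℓ (y (pos ℓ) - y (neg ℓ))⟫) ≤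
      -(1 - Finset.univ.sup' Finset.univ_nonempty κ) * ∑ i, r i :=
  stmt_2_general pos neg hpn σ hσ φ a c A y r hr κ s hσs hdis
end

section
/- Let K > 0, σ > 0, and 0 ≤ a < b. Define T := (σ/K)·(arctan(K·b) − arctan(K·a)). Then 0 < T < (σ/K)·(π/2), and for any function θ : ℝ → ℝ that is differentiable on [0, T] with θ(0) = b and θ′(t) = −(1/σ)·(1 + K²·θ(t)²) for all t ∈ [0, T], one has θ(T) = a. -/
/-!
Along a solution of `θ' = -(1/σ)(1 + K²θ²)` the quantity `arctan (K θ t) + (K/σ) t` is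
conserved, since `arctan (K θ)` decreases at the constant rate `K/σ`. Hence `θ` falls from
`b` to `a` in exactly the time `(σ/K)(arctan (K b) - arctan (K a))`, which is less than
`(σ/K)(π/2)` because `arctan` takes values in `[0, π/2)` on `[0, ∞)`.
-/

open Real Set

lemma Real.arctan_sub_arctan_lt_pi_div_two {x : ℝ} (hx : 0 ≤ x) (y : ℝ) :
    arctan y - arctan x < π / 2 := by
  linarith [arctan_lt_pi_div_two y, arctan_nonneg.2 hx]

section Riccati

variable {θ : ℝ → ℝ} {K σ t T : ℝ}

lemma hasDerivAt_arctan_mul_add_of_riccati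
    (hθ : HasDerivAt θ (-(1 / σ) * (1 + K ^ 2 * θ t ^ 2)) t) :
    HasDerivAt (fun s ↦ arctan (K * θ s) + K / σ * s) 0 t := by
  have hlin : HasDerivAt (fun s ↦ K / σ * s) (K / σ) t := by
    simpa using (hasDerivAt_id t).const_mul (K / σ)
  refine (((hasDerivAt_arctan (K * θ t)).comp t (hθ.const_mul K)).add hlin).congr_deriv ?_
  have hpos : (0 : ℝ) < 1 + (K * θ t) ^ 2 := by positivity
  field_simp
  ring

lemma arctan_mul_add_eq_of_riccati (hT : 0 ≤ T)
    (hθ : ∀ t ∈ Icc 0 T, HasDerivAt θ (-(1 / σ) * (1 + K ^ 2 * θ t ^ 2)) t) :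
    arctan (K * θ T) + K / σ * T = arctan (K * θ 0) := by
  have hderiv t (ht : t ∈ Icc 0 T) := hasDerivAt_arctan_mul_add_of_riccati (hθ t ht)
  have hcont : ContinuousOn (fun s ↦ arctan (K * θ s) + K / σ * s) (Icc 0 T) :=
    fun t ht ↦ (hderiv t ht).continuousAt.continuousWithinAt
  simpa using constant_of_has_deriv_right_zero hcont
    (fun t ht ↦ (hderiv t (Ico_subset_Icc_self ht)).hasDerivWithinAt) T (right_mem_Icc.2 hT)

end Riccati

theorem stmt_7 (K σ a b : ℝ) (hK : 0 < K) (hσ : 0 < σ) (ha : 0 ≤ a) (hab : a < b)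
    (T : ℝ) (hT : T = (σ / K) * (Real.arctan (K * b) - Real.arctan (K * a))) :
    0 < T ∧ T < (σ / K) * (Real.pi / 2) ∧
      ∀ θ : ℝ → ℝ, θ 0 = b →
        (∀ t ∈ Set.Icc (0 : ℝ) T,
          HasDerivAt θ (-(1 / σ) * (1 + K ^ 2 * (θ t) ^ 2)) t) →
        θ T = a := by
  have hσK : 0 < σ / K := div_pos hσ hK
  have harc : arctan (K * a) < arctan (K * b) := arctan_strictMono (by nlinarith)
  have hT0 : 0 < T := hT ▸ mul_pos hσK (sub_pos.2 harc)
  refine ⟨hT0, hT ▸ mul_lt_mul_of_pos_left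
    (arctan_sub_arctan_lt_pi_div_two (by positivity) _) hσK, fun θ hθ0 hθ ↦ ?_⟩
  have hconserved := arctan_mul_add_eq_of_riccati hT0.le hθ
  have htime : K / σ * T = arctan (K * b) - arctan (K * a) := by
    rw [hT]
    field_simp
  have hend : arctan (K * θ T) = arctan (K * a) := by
    rw [hθ0] at hconserved
    linarith
  exact mul_left_cancel₀ hK.ne' (arctan_injective hend)
end

section
/- Let K > 0, σ > 0, a, b ∈ ℝ, τ ≥ 0, and let φ : ℝ → ℝ be differentiable on [0, τ] with φ(0) = b, φ(τ) = a, and φ′(t) ≥ −(1/σ)·(1 + K²·φ(t)²) for all t ∈ [0, τ]. Then τ ≥ (σ/K)·(arctan(K·b) − arctan(K·a)). -/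
/-!
The solution of the worst-case clock equation `θ' = -(1/σ)(1 + K²θ²)` is
`θ(t) = tan(arctan(Kθ₀) - (K/σ) t) / K`, so `arctan (K φ)` is the natural coordinate: the
differential inequality for `φ` says exactly that `arctan (K φ t)` decreases with slope at least
`-K/σ`, and the mean value theorem turns this into the bound on `τ`.
-/

open Real Set

theorem mul_sub_le_sub_of_hasDerivAt_Icc {f f' : ℝ → ℝ} {C s t : ℝ} (hst : s ≤ t)
    (hf : ∀ x ∈ Icc s t, HasDerivAt f (f' x) x) (hf' : ∀ x ∈ Icc s t, C ≤ f' x) :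
    C * (t - s) ≤ f t - f s := by
  refine (convex_Icc s t).mul_sub_le_image_sub_of_le_deriv
    (fun x hx => (hf x hx).continuousAt.continuousWithinAt)
    (fun x hx => (hf x (interior_subset hx)).differentiableAt.differentiableWithinAt)
    (fun x hx => ?_) s (left_mem_Icc.2 hst) t (right_mem_Icc.2 hst) hst
  rw [(hf x (interior_subset hx)).deriv]
  exact hf' x (interior_subset hx)

theorem neg_div_le_arctan_deriv_of_riccati_ge {K σ y y' : ℝ} (hK : 0 ≤ K)
    (h : -(1 / σ) * (1 + K ^ 2 * y ^ 2) ≤ y') :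
    -(K / σ) ≤ 1 / (1 + (K * y) ^ 2) * (K * y') := by
  have hden : 0 < 1 + (K * y) ^ 2 := by positivity
  have hKy' : -(K / σ) * (1 + (K * y) ^ 2) ≤ K * y' := by
    calc -(K / σ) * (1 + (K * y) ^ 2) = K * (-(1 / σ) * (1 + K ^ 2 * y ^ 2)) := by ring
      _ ≤ K * y' := mul_le_mul_of_nonneg_left h hK
  rw [one_div_mul_eq_div, le_div_iff₀ hden]
  exact hKy'

theorem arctan_sub_ge_of_riccati_ge {K σ s t : ℝ} {φ φ' : ℝ → ℝ} (hK : 0 ≤ K) (hst : s ≤ t)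
    (hφ : ∀ x ∈ Icc s t, HasDerivAt φ (φ' x) x)
    (hφ' : ∀ x ∈ Icc s t, -(1 / σ) * (1 + K ^ 2 * φ x ^ 2) ≤ φ' x) :
    -(K / σ) * (t - s) ≤ arctan (K * φ t) - arctan (K * φ s) :=
  mul_sub_le_sub_of_hasDerivAt_Icc hst (fun x hx => ((hφ x hx).const_mul K).arctan)
    (fun x hx => neg_div_le_arctan_deriv_of_riccati_ge hK (hφ' x hx))

theorem stmt_8 (K σ a b τ : ℝ) (hK : 0 < K) (hσ : 0 < σ) (hτ : 0 ≤ τ)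
    (φ φ' : ℝ → ℝ) (hφ0 : φ 0 = b) (hφτ : φ τ = a)
    (hφ : ∀ t ∈ Set.Icc (0 : ℝ) τ, HasDerivAt φ (φ' t) t)
    (hφ' : ∀ t ∈ Set.Icc (0 : ℝ) τ, φ' t ≥ -(1 / σ) * (1 + K ^ 2 * (φ t) ^ 2)) :
    τ ≥ (σ / K) * (Real.arctan (K * b) - Real.arctan (K * a)) := by
  have hslope := arctan_sub_ge_of_riccati_ge hK.le hτ hφ hφ'
  rw [hφ0, hφτ, sub_zero] at hslope
  calc (σ / K) * (arctan (K * b) - arctan (K * a))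
      ≤ (σ / K) * ((K / σ) * τ) := by gcongr; linarith
    _ = τ := by field_simp
end

section
/- Let c > 0 and φ : ℝⁿ → ℝⁿ continuous satisfy the strong monotonicity condition ⟨v − v′, φ(v′) − φ(v)⟩ ≥ c·‖v − v′‖² for all v, v′ ∈ ℝⁿ. Let t₀ ≤ t₁, ū ≥ 0, let u, w : [t₀, t₁] → ℝⁿ be continuous with ‖u(t) − w(t)‖ ≤ ū for all t ∈ [t₀, t₁], and let x, y : ℝ → ℝⁿ be differentiable on [t₀, t₁] with x′(t) = φ(x(t)) + u(t) and y′(t) = φ(y(t)) + w(t) for all t ∈ [t₀, t₁]. Then for every t ∈ [t₀, t₁]: ‖x(t) − y(t)‖² ≤ exp(−c·(t − t₀))·‖x(t₀) − y(t₀)‖² + (ū²/c²)·(1 − exp(−c·(t − t₀))). -/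
/-!
`V = ‖x - y‖²` satisfies `V' = 2⟪x - y, φ x - φ y⟫ + 2⟪x - y, u - w⟫ ≤ -2cV + 2√V·ū`, and Young's
inequality `2√V·ū ≤ cV + ū²/c` turns this into the linear differential inequality
`V' ≤ -cV + ū²/c`, which Grönwall's lemma integrates to the claimed bound.
-/

open RealInnerProductSpace Set

theorem gronwallBound_neg {c : ℝ} (hc : c ≠ 0) (δ ε x : ℝ) :
    gronwallBound δ (-c) ε x = Real.exp (-c * x) * δ + ε / c * (1 - Real.exp (-c * x)) := by
  rw [gronwallBound_of_K_ne_0 (neg_ne_zero.mpr hc)]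
  field_simp
  ring

theorem le_gronwallBound_of_hasDerivAt {f f' : ℝ → ℝ} {K ε a b : ℝ}
    (hf : ∀ t ∈ Icc a b, HasDerivAt f (f' t) t) (bound : ∀ t ∈ Ico a b, f' t ≤ K * f t + ε) :
    ∀ t ∈ Icc a b, f t ≤ gronwallBound (f a) K ε (t - a) :=
  le_gronwallBound_of_liminf_deriv_right_le
    (fun t ht => (hf t ht).continuousAt.continuousWithinAt)
    (fun t ht _ hr => (hf t (Ico_subset_Icc_self ht)).hasDerivWithinAt.liminf_right_slope_le hr)
    le_rfl bound

theorem norm_sq_le_of_two_inner_deriv_le {E : Type*} [NormedAddCommGroup E]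
    [InnerProductSpace ℝ E] {g g' : ℝ → E} {c ε a b : ℝ} (hc : c ≠ 0)
    (hg : ∀ t ∈ Icc a b, HasDerivAt g (g' t) t)
    (bound : ∀ t ∈ Ico a b, 2 * ⟪g t, g' t⟫ ≤ -c * ‖g t‖ ^ 2 + ε) :
    ∀ t ∈ Icc a b,
      ‖g t‖ ^ 2 ≤ Real.exp (-c * (t - a)) * ‖g a‖ ^ 2 + ε / c * (1 - Real.exp (-c * (t - a))) := by
  intro t ht
  rw [← gronwallBound_neg hc]
  exact le_gronwallBound_of_hasDerivAt (fun s hs => (hg s hs).norm_sq) bound t ht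

theorem two_mul_le_mul_sq_add_sq_div {c : ℝ} (hc : 0 < c) (a b : ℝ) :
    2 * (a * b) ≤ c * a ^ 2 + b ^ 2 / c := by
  have key : c * (2 * (a * b)) ≤ c * (c * a ^ 2 + b ^ 2 / c) := by
    rw [mul_add, mul_div_cancel₀ _ hc.ne']
    nlinarith [sq_nonneg (c * a - b)]
  exact le_of_mul_le_mul_left key hc

theorem two_inner_sub_add_sub_le {E : Type*} [NormedAddCommGroup E] [InnerProductSpace ℝ E]
    {φ : E → E} {c r : ℝ} (hc : 0 < c) (hmono : ∀ v v' : E, ⟪v - v', φ v' - φ v⟫ ≥ c * ‖v - v'‖ ^ 2)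
    {a b p q : E} (hpq : ‖p - q‖ ≤ r) :
    2 * ⟪a - b, (φ a + p) - (φ b + q)⟫ ≤ -c * ‖a - b‖ ^ 2 + r ^ 2 / c := by
  have hdrift : ⟪a - b, φ a - φ b⟫ ≤ -(c * ‖a - b‖ ^ 2) := by
    rw [← neg_sub (φ b), inner_neg_right]
    exact neg_le_neg (hmono a b)
  have hinput : ⟪a - b, p - q⟫ ≤ ‖a - b‖ * r :=
    (real_inner_le_norm _ _).trans (mul_le_mul_of_nonneg_left hpq (norm_nonneg _))
  have hsplit : (φ a + p) - (φ b + q) = (φ a - φ b) + (p - q) := by abel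
  rw [hsplit, inner_add_right]
  linarith [two_mul_le_mul_sq_add_sq_div hc ‖a - b‖ r]

theorem stmt_15_general {n : ℕ} (c : ℝ) (hc : 0 < c)
    (φ : EuclideanSpace ℝ (Fin n) → EuclideanSpace ℝ (Fin n))
    (hmono : ∀ v v' : EuclideanSpace ℝ (Fin n), ⟪v - v', φ v' - φ v⟫ ≥ c * ‖v - v'‖ ^ 2)
    (t₀ t₁ : ℝ) (ubar : ℝ)
    (u w : ℝ → EuclideanSpace ℝ (Fin n))
    (huw : ∀ t ∈ Set.Icc t₀ t₁, ‖u t - w t‖ ≤ ubar)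
    (x y : ℝ → EuclideanSpace ℝ (Fin n))
    (hx : ∀ t ∈ Set.Icc t₀ t₁, HasDerivAt x (φ (x t) + u t) t)
    (hy : ∀ t ∈ Set.Icc t₀ t₁, HasDerivAt y (φ (y t) + w t) t) :
    ∀ t ∈ Set.Icc t₀ t₁,
      ‖x t - y t‖ ^ 2 ≤ Real.exp (-c * (t - t₀)) * ‖x t₀ - y t₀‖ ^ 2 +
        (ubar ^ 2 / c ^ 2) * (1 - Real.exp (-c * (t - t₀))) := by
  rw [sq c, ← div_div]
  exact norm_sq_le_of_two_inner_deriv_le (g := x - y) hc.ne'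
    (fun t ht => (hx t ht).sub (hy t ht))
    (fun t ht => two_inner_sub_add_sub_le hc hmono (huw t (Ico_subset_Icc_self ht)))

theorem stmt_15 {n : ℕ} (c : ℝ) (hc : 0 < c)
    (φ : EuclideanSpace ℝ (Fin n) → EuclideanSpace ℝ (Fin n)) (hφcont : Continuous φ)
    (hmono : ∀ v v' : EuclideanSpace ℝ (Fin n), ⟪v - v', φ v' - φ v⟫ ≥ c * ‖v - v'‖ ^ 2)
    (t₀ t₁ : ℝ) (ht : t₀ ≤ t₁) (ubar : ℝ) (hubar : 0 ≤ ubar)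
    (u w : ℝ → EuclideanSpace ℝ (Fin n))
    (hu : ContinuousOn u (Set.Icc t₀ t₁)) (hw : ContinuousOn w (Set.Icc t₀ t₁))
    (huw : ∀ t ∈ Set.Icc t₀ t₁, ‖u t - w t‖ ≤ ubar)
    (x y : ℝ → EuclideanSpace ℝ (Fin n))
    (hx : ∀ t ∈ Set.Icc t₀ t₁, HasDerivAt x (φ (x t) + u t) t)
    (hy : ∀ t ∈ Set.Icc t₀ t₁, HasDerivAt y (φ (y t) + w t) t) :
    ∀ t ∈ Set.Icc t₀ t₁,
      ‖x t - y t‖ ^ 2 ≤ Real.exp (-c * (t - t₀)) * ‖x t₀ - y t₀‖ ^ 2 +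
        (ubar ^ 2 / c ^ 2) * (1 - Real.exp (-c * (t - t₀))) :=
  stmt_15_general c hc φ hmono t₀ t₁ ubar u w huw x y hx hy
end
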